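/- arXiv:0905.4476 — 5 statements merged into one kernel-verified Lean document; each statement's English description precedes it below -/
import Mathlib

section
/- Let M ≥ 1 be an integer and k_1, …, k_M > 0 real numbers. Define f(ρ) = ∫_0^∞ Π_{i=1}^{M} (1 − e^{−k_i v²/ρ}) · (1/√(2π)) e^{−v²/2} dv for ρ > 0. Then lim_{ρ→∞} (log f(ρ))/(log ρ) = −M; that is, f(ρ) is exponentially equal to ρ^{−M}. -/
open MeasureTheory Real Filter

lemma aux_one_sub_exp_le (x : ℝ) : 1 - Real.exp (-x) ≤ x := by
  have h := Real.add_one_le_exp (-x)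
  nlinarith [Real.exp_pos (-x), Real.exp_pos x, Real.add_one_le_exp x]

lemma aux_le_one_sub_exp {x : ℝ} (h0 : 0 ≤ x) (h1 : x ≤ 1) :
    x * Real.exp (-1) ≤ 1 - Real.exp (-x) := by
  have h2 : x * Real.exp (-x) ≤ 1 - Real.exp (-x) := by
    have h := Real.add_one_le_exp x
    have hx := Real.exp_pos (-x)
    have : (x + 1) * Real.exp (-x) ≤ Real.exp x * Real.exp (-x) := by
      exact mul_le_mul_of_nonneg_right h hx.le
    rw [← Real.exp_add] at this
    simp at this
    nlinarith
  have h3 : Real.exp (-1) ≤ Real.exp (-x) := Real.exp_le_exp.2 (by linarith)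
  nlinarith

/-- Let `M ≥ 1` and `k_1, …, k_M > 0`.  Define
`f(ρ) = ∫_0^∞ ∏_{i=1}^M (1 − e^{−k_i v²/ρ}) (1/√(2π)) e^{−v²/2} dv` for `ρ > 0`.
Then `lim_{ρ→∞} (log f(ρ))/(log ρ) = −M`, i.e. `f(ρ) ≐ ρ^{−M}`. -/
theorem product_integral_exponential_order (M : ℕ) (hM : 1 ≤ M)
    (k : Fin M → ℝ) (hk : ∀ i, 0 < k i) :
    Tendsto
      (fun ρ : ℝ =>
        Real.log (∫ v in Set.Ioi (0 : ℝ),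
            (∏ i, (1 - Real.exp (-k i * v ^ 2 / ρ))) *
              ((Real.sqrt (2 * Real.pi))⁻¹ * Real.exp (-v ^ 2 / 2))) / Real.log ρ)
      atTop (nhds (-(M : ℝ))) := by
  set g : ℝ → ℝ := fun v => (Real.sqrt (2 * Real.pi))⁻¹ * Real.exp (-v ^ 2 / 2) with hg_def
  set f : ℝ → ℝ := fun ρ => ∫ v in Set.Ioi (0 : ℝ),
      (∏ i, (1 - Real.exp (-k i * v ^ 2 / ρ))) * g v with hf_def
  have hsqrt : 0 < (Real.sqrt (2 * Real.pi))⁻¹ := by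
    have := Real.pi_pos
    positivity
  have hg_pos : ∀ v : ℝ, 0 < g v := fun v => mul_pos hsqrt (Real.exp_pos _)
  -- equality of exp forms
  have hexp_eq : ∀ v : ℝ, Real.exp (-v ^ 2 / 2) = Real.exp (-(1/2) * v ^ 2) := by
    intro v; congr 1; ring
  -- integrability of v ^ (2M) * g v on Ioi 0
  have hpow_int : IntegrableOn (fun v : ℝ => v ^ (2 * M) * g v) (Set.Ioi 0) := by
    have h1 : IntegrableOn (fun v : ℝ => v ^ ((2 * M : ℕ) : ℝ) * Real.exp (-(1/2) * v ^ 2))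
        (Set.Ioi 0) := integrableOn_rpow_mul_exp_neg_mul_sq (by norm_num)
          (lt_of_lt_of_le (by norm_num) (Nat.cast_nonneg _))
    have h2 : IntegrableOn (fun v : ℝ => v ^ (2 * M) * Real.exp (-(1/2) * v ^ 2))
        (Set.Ioi 0) := by
      refine h1.congr_fun (fun v _ => ?_) measurableSet_Ioi
      simp only [Real.rpow_natCast]
    have h3 : IntegrableOn (fun v : ℝ => (Real.sqrt (2 * Real.pi))⁻¹ *
        (v ^ (2 * M) * Real.exp (-(1/2) * v ^ 2))) (Set.Ioi 0) :=
      h2.const_mul (Real.sqrt (2 * Real.pi))⁻¹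
    refine h3.congr_fun (fun v _ => ?_) measurableSet_Ioi
    simp only [hg_def, hexp_eq]; ring
  have hpow_int' : IntegrableOn (fun v : ℝ => v ^ (2 * M) * g v) (Set.Ioc 0 1) :=
    hpow_int.mono_set Set.Ioc_subset_Ioi_self
  -- gaussian on Ioi 0
  have hg_int : IntegrableOn g (Set.Ioi 0) := by
    have h1 : IntegrableOn (fun v : ℝ =>
        (Real.sqrt (2 * Real.pi))⁻¹ * Real.exp (-(1/2) * v ^ 2)) (Set.Ioi 0) :=
      ((integrable_exp_neg_mul_sq (by norm_num : (0:ℝ) < 1/2)).const_mul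
        (Real.sqrt (2 * Real.pi))⁻¹).integrableOn
    refine h1.congr_fun (fun v _ => ?_) measurableSet_Ioi
    simp only [hg_def, hexp_eq]
  set K : ℝ := ∏ i, k i with hK_def
  have hK : 0 < K := Finset.prod_pos (fun i _ => hk i)
  set C0 : ℝ := ∫ v in Set.Ioi (0:ℝ), v ^ (2 * M) * g v with hC0_def
  set c0 : ℝ := ∫ v in Set.Ioc (0:ℝ) 1, v ^ (2 * M) * g v with hc0_def
  have hc0_pos : 0 < c0 := by
    rw [hc0_def]
    refine (setIntegral_pos_iff_support_of_nonneg_ae ?_ hpow_int').2 ?_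
    · filter_upwards [ae_restrict_mem measurableSet_Ioc] with v hv
      exact mul_nonneg (pow_nonneg hv.1.le _) (hg_pos v).le
    · have hsub : Set.Ioc (0:ℝ) 1 ⊆ Function.support (fun v : ℝ => v ^ (2 * M) * g v)
          ∩ Set.Ioc 0 1 := by
        intro v hv
        refine ⟨?_, hv⟩
        have hv0 : 0 < v := hv.1
        simp only [Function.mem_support]
        exact ne_of_gt (mul_pos (pow_pos hv0 _) (hg_pos v))
      have h1 : (0 : ENNReal) < volume (Set.Ioc (0:ℝ) 1) := by simp
      exact lt_of_lt_of_le h1 (measure_mono hsub)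
  have hC0_pos : 0 < C0 := by
    have h := setIntegral_mono_set (s := Set.Ioc (0:ℝ) 1) hpow_int
      (by filter_upwards [ae_restrict_mem measurableSet_Ioi] with v hv
          exact mul_nonneg (pow_nonneg hv.le _) (hg_pos v).le)
      (HasSubset.Subset.eventuallyLE Set.Ioc_subset_Ioi_self)
    exact lt_of_lt_of_le hc0_pos h
  have hshow : ∀ ρ : ℝ, f ρ = ∫ v in Set.Ioi (0 : ℝ),
      (∏ i, (1 - Real.exp (-k i * v ^ 2 / ρ))) *
        ((Real.sqrt (2 * Real.pi))⁻¹ * Real.exp (-v ^ 2 / 2)) := fun ρ => rfl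
  -- the product is between 0 and 1 for ρ > 0
  have hprod_mem : ∀ (ρ : ℝ), 0 < ρ → ∀ v : ℝ,
      0 ≤ (∏ i, (1 - Real.exp (-k i * v ^ 2 / ρ))) ∧
      (∏ i, (1 - Real.exp (-k i * v ^ 2 / ρ))) ≤ 1 := by
    intro ρ hρ v
    have h1 : ∀ i : Fin M, 0 ≤ 1 - Real.exp (-k i * v ^ 2 / ρ) := by
      intro i
      have : -k i * v ^ 2 / ρ ≤ 0 := by
        have := (hk i).le
        have := sq_nonneg v
        apply div_nonpos_of_nonpos_of_nonneg _ hρ.le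
        nlinarith
      have := Real.exp_le_one_iff.2 this
      linarith
    constructor
    · exact Finset.prod_nonneg (fun i _ => h1 i)
    · apply Finset.prod_le_one (fun i _ => h1 i)
      intro i _
      have := Real.exp_pos (-k i * v ^ 2 / ρ)
      linarith
  -- integrability of the integrand for ρ > 0
  have hF_int : ∀ (ρ : ℝ), 0 < ρ → IntegrableOn
      (fun v : ℝ => (∏ i, (1 - Real.exp (-k i * v ^ 2 / ρ))) * g v) (Set.Ioi 0) := by
    intro ρ hρ
    apply Integrable.mono' hg_int
    · apply Continuous.aestronglyMeasurable
      apply Continuous.mul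
      · exact continuous_finset_prod _ (fun i _ => by fun_prop)
      · fun_prop
    · filter_upwards with v
      rw [Real.norm_eq_abs, abs_mul, abs_of_nonneg (hprod_mem ρ hρ v).1,
        abs_of_nonneg (hg_pos v).le]
      have := mul_le_mul_of_nonneg_right (hprod_mem ρ hρ v).2 (hg_pos v).le
      simpa using this
  -- the key bounds
  set ρ₀ : ℝ := 2 + ∑ i, k i with hρ₀_def
  have hρ₀ : 2 ≤ ρ₀ := by
    have : 0 ≤ ∑ i, k i := Finset.sum_nonneg (fun i _ => (hk i).le)
    linarith
  have hbounds : ∀ ρ : ℝ, ρ₀ ≤ ρ →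
      (K * (Real.exp (-1)) ^ M / ρ ^ M) * c0 ≤ f ρ ∧ f ρ ≤ (K / ρ ^ M) * C0 := by
    intro ρ hρ
    have hρpos : 0 < ρ := by linarith
    have hρM : 0 < ρ ^ M := by positivity
    constructor
    · -- lower bound
      have hle1 : ∀ v ∈ Set.Ioc (0:ℝ) 1,
          (K * (Real.exp (-1)) ^ M / ρ ^ M) * (v ^ (2 * M) * g v) ≤
          (∏ i, (1 - Real.exp (-k i * v ^ 2 / ρ))) * g v := by
        intro v hv
        have hv0 : 0 < v := hv.1
        have hv1 : v ≤ 1 := hv.2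
        have hvsq : v ^ 2 ≤ 1 := by nlinarith
        rw [show (K * (Real.exp (-1)) ^ M / ρ ^ M) * (v ^ (2 * M) * g v) =
          ((K * (Real.exp (-1)) ^ M / ρ ^ M) * v ^ (2 * M)) * g v from by ring]
        apply mul_le_mul_of_nonneg_right _ (hg_pos v).le
        have hfac : ∀ i : Fin M, (k i * v ^ 2 / ρ) * Real.exp (-1) ≤
            1 - Real.exp (-k i * v ^ 2 / ρ) := by
          intro i
          have hx0 : 0 ≤ k i * v ^ 2 / ρ :=
            div_nonneg (mul_nonneg (hk i).le (sq_nonneg v)) hρpos.le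
          have hki : k i ≤ ρ := by
            have : k i ≤ ∑ j, k j :=
              Finset.single_le_sum (fun j _ => (hk j).le) (Finset.mem_univ i)
            linarith
          have hx1 : k i * v ^ 2 / ρ ≤ 1 := by
            rw [div_le_one hρpos]
            nlinarith [(hk i).le]
          have := aux_le_one_sub_exp hx0 hx1
          have harg : -k i * v ^ 2 / ρ = -(k i * v ^ 2 / ρ) := by ring
          rw [harg]
          exact this
        calc (K * (Real.exp (-1)) ^ M / ρ ^ M) * v ^ (2 * M)
            = ∏ i, ((k i * v ^ 2 / ρ) * Real.exp (-1)) := by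
              rw [Finset.prod_mul_distrib, Finset.prod_div_distrib,
                Finset.prod_mul_distrib, Finset.prod_const, Finset.prod_const,
                Finset.prod_const, Finset.card_univ, Fintype.card_fin, ← hK_def,
                pow_mul]
              ring
          _ ≤ ∏ i, (1 - Real.exp (-k i * v ^ 2 / ρ)) := by
              apply Finset.prod_le_prod (fun i _ => ?_) (fun i _ => hfac i)
              exact mul_nonneg (div_nonneg (mul_nonneg (hk i).le (sq_nonneg v))
                hρpos.le) (Real.exp_pos _).le
      calc (K * (Real.exp (-1)) ^ M / ρ ^ M) * c0
          = ∫ v in Set.Ioc (0:ℝ) 1,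
              (K * (Real.exp (-1)) ^ M / ρ ^ M) * (v ^ (2 * M) * g v) := by
            rw [hc0_def]; exact (integral_const_mul _ _).symm
        _ ≤ ∫ v in Set.Ioc (0:ℝ) 1,
              (∏ i, (1 - Real.exp (-k i * v ^ 2 / ρ))) * g v := by
            apply setIntegral_mono_on _ ((hF_int ρ hρpos).mono_set
              Set.Ioc_subset_Ioi_self) measurableSet_Ioc hle1
            exact (hpow_int'.const_mul _)
        _ ≤ f ρ := by
            apply setIntegral_mono_set (hF_int ρ hρpos)
            · filter_upwards [ae_restrict_mem measurableSet_Ioi] with v _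
              exact mul_nonneg (hprod_mem ρ hρpos v).1 (hg_pos v).le
            · exact HasSubset.Subset.eventuallyLE Set.Ioc_subset_Ioi_self
    · -- upper bound
      have hle2 : ∀ v ∈ Set.Ioi (0:ℝ),
          (∏ i, (1 - Real.exp (-k i * v ^ 2 / ρ))) * g v ≤
          (K / ρ ^ M) * (v ^ (2 * M) * g v) := by
        intro v _
        rw [show (K / ρ ^ M) * (v ^ (2 * M) * g v) =
          ((K / ρ ^ M) * v ^ (2 * M)) * g v from by ring]
        apply mul_le_mul_of_nonneg_right _ (hg_pos v).le
        calc (∏ i, (1 - Real.exp (-k i * v ^ 2 / ρ)))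
            ≤ ∏ i, (k i * v ^ 2 / ρ) := by
              apply Finset.prod_le_prod
              · intro i _
                have h1 : -k i * v ^ 2 / ρ ≤ 0 := by
                  apply div_nonpos_of_nonpos_of_nonneg _ hρpos.le
                  nlinarith [(hk i).le, sq_nonneg v]
                have := Real.exp_le_one_iff.2 h1
                linarith
              · intro i _
                have harg : -k i * v ^ 2 / ρ = -(k i * v ^ 2 / ρ) := by ring
                rw [harg]
                exact aux_one_sub_exp_le _
          _ = (K / ρ ^ M) * v ^ (2 * M) := by
              rw [Finset.prod_div_distrib, Finset.prod_mul_distrib,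
                Finset.prod_const, Finset.prod_const, Finset.card_univ,
                Fintype.card_fin, ← hK_def, pow_mul]
              ring
      calc f ρ ≤ ∫ v in Set.Ioi (0:ℝ), (K / ρ ^ M) * (v ^ (2 * M) * g v) := by
            apply setIntegral_mono_on (hF_int ρ hρpos) (hpow_int.const_mul _)
              measurableSet_Ioi hle2
        _ = (K / ρ ^ M) * C0 := by rw [hC0_def]; exact integral_const_mul _ _
  -- now the squeeze
  set c : ℝ := K * (Real.exp (-1)) ^ M * c0 with hc_def
  set C : ℝ := K * C0 with hC_def
  have hc_pos : 0 < c := by positivity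
  have hC_pos : 0 < C := by positivity
  have hlow : Tendsto (fun ρ : ℝ => Real.log c / Real.log ρ - (M : ℝ)) atTop
      (nhds (-(M : ℝ))) := by
    have := (tendsto_const_nhds (x := Real.log c)).div_atTop Real.tendsto_log_atTop
    have h2 := this.sub_const (M : ℝ)
    simpa using h2
  have hhigh : Tendsto (fun ρ : ℝ => Real.log C / Real.log ρ - (M : ℝ)) atTop
      (nhds (-(M : ℝ))) := by
    have := (tendsto_const_nhds (x := Real.log C)).div_atTop Real.tendsto_log_atTop
    have h2 := this.sub_const (M : ℝ)
    simpa using h2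
  have hgoal : Tendsto (fun ρ : ℝ => Real.log (f ρ) / Real.log ρ) atTop
      (nhds (-(M : ℝ))) → Tendsto
      (fun ρ : ℝ =>
        Real.log (∫ v in Set.Ioi (0 : ℝ),
            (∏ i, (1 - Real.exp (-k i * v ^ 2 / ρ))) *
              ((Real.sqrt (2 * Real.pi))⁻¹ * Real.exp (-v ^ 2 / 2))) / Real.log ρ)
      atTop (nhds (-(M : ℝ))) := by
    intro h
    refine h.congr (fun ρ => ?_)
    rw [hshow]
  apply hgoal
  apply tendsto_of_tendsto_of_tendsto_of_le_of_le' hlow hhigh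
  · filter_upwards [eventually_ge_atTop ρ₀] with ρ hρ
    have hρ2 : 2 ≤ ρ := le_trans hρ₀ hρ
    have hlog : 0 < Real.log ρ := Real.log_pos (by linarith)
    have hρpos : (0:ℝ) < ρ := by linarith
    have hρM : (0:ℝ) < ρ ^ M := by positivity
    obtain ⟨hlb, _⟩ := hbounds ρ hρ
    have hflb : c / ρ ^ M ≤ f ρ := by
      rw [hc_def]; calc K * Real.exp (-1) ^ M * c0 / ρ ^ M
          = K * Real.exp (-1) ^ M / ρ ^ M * c0 := by ring
        _ ≤ f ρ := hlb
    have hfpos : 0 < f ρ := lt_of_lt_of_le (by positivity) hflb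
    have hloglb : Real.log (c / ρ ^ M) ≤ Real.log (f ρ) :=
      Real.log_le_log (by positivity) hflb
    rw [Real.log_div (ne_of_gt hc_pos) (ne_of_gt hρM), Real.log_pow] at hloglb
    calc Real.log c / Real.log ρ - (M:ℝ)
        = (Real.log c - (M:ℝ) * Real.log ρ) / Real.log ρ := by
          field_simp
      _ ≤ Real.log (f ρ) / Real.log ρ := by gcongr
  · filter_upwards [eventually_ge_atTop ρ₀] with ρ hρ
    have hρ2 : 2 ≤ ρ := le_trans hρ₀ hρ
    have hlog : 0 < Real.log ρ := Real.log_pos (by linarith)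
    have hρpos : (0:ℝ) < ρ := by linarith
    have hρM : (0:ℝ) < ρ ^ M := by positivity
    obtain ⟨hlb, hub⟩ := hbounds ρ hρ
    have hflb : c / ρ ^ M ≤ f ρ := by
      rw [hc_def]; calc K * Real.exp (-1) ^ M * c0 / ρ ^ M
          = K * Real.exp (-1) ^ M / ρ ^ M * c0 := by ring
        _ ≤ f ρ := hlb
    have hfpos : 0 < f ρ := lt_of_lt_of_le (by positivity) hflb
    have hfub : f ρ ≤ C / ρ ^ M := by
      rw [hC_def]; calc f ρ ≤ K / ρ ^ M * C0 := hub
        _ = K * C0 / ρ ^ M := by ring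
    have hlogub : Real.log (f ρ) ≤ Real.log (C / ρ ^ M) :=
      Real.log_le_log hfpos hfub
    rw [Real.log_div (ne_of_gt hC_pos) (ne_of_gt hρM), Real.log_pow] at hlogub
    calc Real.log (f ρ) / Real.log ρ
        ≤ (Real.log C - (M:ℝ) * Real.log ρ) / Real.log ρ := by gcongr
      _ = Real.log C / Real.log ρ - (M:ℝ) := by field_simp
end

section
/- Let X be an exponentially distributed random variable with rate μ > 0 and let d > 0. Define P(ρ) = E_X[Q(√(2dρX))] for ρ > 0. Then lim_{ρ→∞} (log P(ρ))/(log ρ) = −1; that is, the non-cooperative beacon-detection error probability P(ρ) is exponentially equal to ρ^{−1}. -/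
open MeasureTheory Real Filter Set

lemma phi_integrable : Integrable (fun t : ℝ => (Real.sqrt (2 * Real.pi))⁻¹ * Real.exp (-t ^ 2 / 2)) := by
  have h : Integrable (fun t : ℝ => Real.exp (-(1/2 : ℝ) * t ^ 2)) :=
    integrable_exp_neg_mul_sq (by norm_num)
  have h2 := h.const_mul (Real.sqrt (2 * Real.pi))⁻¹
  convert h2 using 2 with t
  ring_nf

lemma phi_nonneg (t : ℝ) : 0 ≤ (Real.sqrt (2 * Real.pi))⁻¹ * Real.exp (-t ^ 2 / 2) := by
  positivity

noncomputable def gaussQ (x : ℝ) : ℝ :=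
  ∫ t in Set.Ioi x, (Real.sqrt (2 * Real.pi))⁻¹ * Real.exp (-t ^ 2 / 2)

lemma gaussQ_nonneg (x : ℝ) : 0 ≤ gaussQ x :=
  setIntegral_nonneg measurableSet_Ioi fun t _ => phi_nonneg t

lemma gaussQ_antitone : Antitone gaussQ := by
  intro x y hxy
  exact setIntegral_mono_set (phi_integrable.integrableOn)
    (Filter.Eventually.of_forall fun t => phi_nonneg t)
    (HasSubset.Subset.eventuallyLE (Set.Ioi_subset_Ioi hxy))

lemma gaussQ_zero : gaussQ 0 = 1 / 2 := by
  have h : (fun t : ℝ => (Real.sqrt (2 * Real.pi))⁻¹ * Real.exp (-t ^ 2 / 2))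
      = fun t : ℝ => (Real.sqrt (2 * Real.pi))⁻¹ * Real.exp (-(1/2 : ℝ) * t ^ 2) := by
    funext t; ring_nf
  rw [gaussQ, h, integral_const_mul, integral_gaussian_Ioi]
  rw [show (Real.pi / (1/2) : ℝ) = 2 * Real.pi by ring]
  rw [mul_div_assoc', inv_mul_eq_div, div_div]
  rw [div_eq_div_iff (by positivity) (by norm_num)]
  ring

lemma gaussQ_one_pos : 0 < gaussQ 1 := by
  have c := (Real.sqrt (2 * Real.pi))⁻¹
  have hlow : ((Real.sqrt (2 * Real.pi))⁻¹ * Real.exp (-2)) * 1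
      ≤ ∫ t in Set.Ioc (1:ℝ) 2, (Real.sqrt (2 * Real.pi))⁻¹ * Real.exp (-t ^ 2 / 2) := by
    have h1 : ∫ _t in Set.Ioc (1:ℝ) 2, ((Real.sqrt (2 * Real.pi))⁻¹ * Real.exp (-2))
        = ((Real.sqrt (2 * Real.pi))⁻¹ * Real.exp (-2)) * 1 := by
      rw [setIntegral_const]
      simp [Real.volume_Ioc]
      norm_num
    rw [← h1]
    refine setIntegral_mono_on (integrableOn_const ?_)
      (phi_integrable.integrableOn) measurableSet_Ioc ?_
    · rw [Real.volume_Ioc]; exact ENNReal.ofReal_ne_top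
    · intro t ht
      have h2 : -2 ≤ -t ^ 2 / 2 := by nlinarith [ht.1, ht.2]
      exact mul_le_mul_of_nonneg_left (Real.exp_le_exp.2 h2) (by positivity)
  have hsub : (∫ t in Set.Ioc (1:ℝ) 2, (Real.sqrt (2 * Real.pi))⁻¹ * Real.exp (-t ^ 2 / 2))
      ≤ gaussQ 1 :=
    setIntegral_mono_set phi_integrable.integrableOn
      (Filter.Eventually.of_forall fun t => phi_nonneg t)
      (HasSubset.Subset.eventuallyLE Set.Ioc_subset_Ioi_self)
  have : 0 < ((Real.sqrt (2 * Real.pi))⁻¹ * Real.exp (-2)) * 1 := by positivity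
  linarith

lemma gaussQ_le {x : ℝ} (hx : 0 ≤ x) : gaussQ x ≤ Real.sqrt 2 * Real.exp (-x ^ 2 / 4) := by
  have key : gaussQ x ≤ ∫ t in Set.Ioi x,
      Real.exp (-x ^ 2 / 4) * ((Real.sqrt (2 * Real.pi))⁻¹ * Real.exp (-(1/4 : ℝ) * t ^ 2)) := by
    refine setIntegral_mono_on phi_integrable.integrableOn
      (((integrable_exp_neg_mul_sq (by norm_num : (0:ℝ) < 1/4)).const_mul
        (Real.sqrt (2 * Real.pi))⁻¹).const_mul _).integrableOn measurableSet_Ioi ?_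
    intro t ht
    have htx : x ≤ t := le_of_lt ht
    have h2 : -t ^ 2 / 2 ≤ -x ^ 2 / 4 + (-(1/4 : ℝ) * t ^ 2) := by nlinarith
    calc (Real.sqrt (2 * Real.pi))⁻¹ * Real.exp (-t ^ 2 / 2)
        ≤ (Real.sqrt (2 * Real.pi))⁻¹ * (Real.exp (-x ^ 2 / 4) * Real.exp (-(1/4 : ℝ) * t ^ 2)) := by
          rw [← Real.exp_add]
          exact mul_le_mul_of_nonneg_left (Real.exp_le_exp.2 h2) (by positivity)
      _ = Real.exp (-x ^ 2 / 4) * ((Real.sqrt (2 * Real.pi))⁻¹ * Real.exp (-(1/4 : ℝ) * t ^ 2)) := by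
          ring
  have key2 : (∫ t in Set.Ioi x,
      Real.exp (-x ^ 2 / 4) * ((Real.sqrt (2 * Real.pi))⁻¹ * Real.exp (-(1/4 : ℝ) * t ^ 2)))
      ≤ Real.exp (-x ^ 2 / 4) * ((Real.sqrt (2 * Real.pi))⁻¹ * Real.sqrt (Real.pi / (1/4))) := by
    rw [integral_const_mul, integral_const_mul]
    refine mul_le_mul_of_nonneg_left ?_ (Real.exp_nonneg _)
    refine mul_le_mul_of_nonneg_left ?_ (by positivity)
    calc (∫ t in Set.Ioi x, Real.exp (-(1/4 : ℝ) * t ^ 2))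
        ≤ ∫ t : ℝ, Real.exp (-(1/4 : ℝ) * t ^ 2) :=
          setIntegral_le_integral (integrable_exp_neg_mul_sq (by norm_num))
            (Filter.Eventually.of_forall fun t => Real.exp_nonneg _)
      _ = Real.sqrt (Real.pi / (1/4)) := integral_gaussian _
  have hconst : (Real.sqrt (2 * Real.pi))⁻¹ * Real.sqrt (Real.pi / (1/4)) = Real.sqrt 2 := by
    rw [show (Real.pi / (1/4) : ℝ) = 4 * Real.pi by ring]
    rw [inv_mul_eq_div, div_eq_iff (by positivity), ← Real.sqrt_mul (by norm_num)]
    rw [show (2 : ℝ) * (2 * Real.pi) = 4 * Real.pi by ring]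
  calc gaussQ x ≤ _ := key
    _ ≤ _ := key2
    _ = Real.sqrt 2 * Real.exp (-x ^ 2 / 4) := by rw [hconst]; ring

/-- Let `X` be exponentially distributed with rate `μ > 0` and `d > 0`.  The
non-cooperative beacon-detection error probability
`P(ρ) = E_X[Q(√(2dρX))] = ∫_0^∞ Q(√(2dρx)) μ e^{−μx} dx` satisfies
`lim_{ρ→∞} (log P(ρ))/(log ρ) = −1`, i.e. `P(ρ) ≐ ρ^{−1}`. -/
theorem noncooperative_error_diversity_one (μ d : ℝ) (hμ : 0 < μ) (hd : 0 < d) :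
    Tendsto
      (fun ρ : ℝ =>
        Real.log (∫ x in Set.Ioi (0 : ℝ),
            gaussQ (Real.sqrt (2 * d * ρ * x)) * (μ * Real.exp (-μ * x))) / Real.log ρ)
      atTop (nhds (-1)) := by
  set c : ℝ := gaussQ 1 * (μ * Real.exp (-1)) / (2 * d) with hc
  set C : ℝ := 2 * Real.sqrt 2 * μ / d with hC
  have hc0 : 0 < c := by
    have := gaussQ_one_pos
    positivity
  have hC0 : 0 < C := by positivity
  -- integrability for each ρ > 0
  have hmeas : ∀ ρ : ℝ, AEStronglyMeasurable
      (fun x => gaussQ (Real.sqrt (2 * d * ρ * x)) * (μ * Real.exp (-μ * x)))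
      (volume.restrict (Set.Ioi (0:ℝ))) := by
    intro ρ
    have h1 : Measurable fun x : ℝ => Real.sqrt (2 * d * ρ * x) := by fun_prop
    have h2 : Measurable fun x : ℝ => μ * Real.exp (-μ * x) := by fun_prop
    exact ((gaussQ_antitone.measurable.comp h1).mul h2).aestronglyMeasurable
  have hint : ∀ ρ : ℝ, IntegrableOn
      (fun x => gaussQ (Real.sqrt (2 * d * ρ * x)) * (μ * Real.exp (-μ * x)))
      (Set.Ioi (0:ℝ)) := by
    intro ρ
    refine Integrable.mono' (((exp_neg_integrableOn_Ioi 0 hμ).const_mul μ).const_mul (1/2))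
      (hmeas ρ) (Filter.Eventually.of_forall fun x => ?_)
    have h1 : gaussQ (Real.sqrt (2 * d * ρ * x)) ≤ 1/2 := by
      rw [← gaussQ_zero]
      exact gaussQ_antitone (Real.sqrt_nonneg _)
    have h2 : 0 ≤ μ * Real.exp (-μ * x) := by positivity
    rw [Real.norm_eq_abs, abs_of_nonneg (mul_nonneg (gaussQ_nonneg _) h2)]
    exact mul_le_mul_of_nonneg_right h1 h2
  -- upper bound
  have hupper : ∀ ρ : ℝ, 2 ≤ ρ →
      (∫ x in Set.Ioi (0:ℝ), gaussQ (Real.sqrt (2 * d * ρ * x)) * (μ * Real.exp (-μ * x)))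
        ≤ C / ρ := by
    intro ρ hρ
    have hρ0 : 0 < ρ := by linarith
    set b : ℝ := d * ρ / 2 + μ with hb
    have hb0 : 0 < b := by positivity
    have step1 : (∫ x in Set.Ioi (0:ℝ),
          gaussQ (Real.sqrt (2 * d * ρ * x)) * (μ * Real.exp (-μ * x)))
        ≤ ∫ x in Set.Ioi (0:ℝ), Real.sqrt 2 * μ * Real.exp (-b * x) := by
      refine setIntegral_mono_on (hint ρ)
        (((exp_neg_integrableOn_Ioi 0 hb0).const_mul _)) measurableSet_Ioi ?_
      intro x hx
      have hx0 : 0 < x := hx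
      have harg : 0 ≤ 2 * d * ρ * x := by positivity
      have hsq : Real.sqrt (2 * d * ρ * x) ^ 2 = 2 * d * ρ * x := Real.sq_sqrt harg
      have h1 : gaussQ (Real.sqrt (2 * d * ρ * x))
          ≤ Real.sqrt 2 * Real.exp (-(2 * d * ρ * x) / 4) := by
        have := gaussQ_le (Real.sqrt_nonneg (2 * d * ρ * x))
        rwa [hsq] at this
      have h2 : 0 ≤ μ * Real.exp (-μ * x) := by positivity
      calc gaussQ (Real.sqrt (2 * d * ρ * x)) * (μ * Real.exp (-μ * x))
          ≤ Real.sqrt 2 * Real.exp (-(2 * d * ρ * x) / 4) * (μ * Real.exp (-μ * x)) :=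
            mul_le_mul_of_nonneg_right h1 h2
        _ = Real.sqrt 2 * μ * Real.exp (-b * x) := by
            rw [show (-b * x : ℝ) = -(2 * d * ρ * x) / 4 + -μ * x by rw [hb]; ring,
              Real.exp_add]
            ring
    have step2 : (∫ x in Set.Ioi (0:ℝ), Real.sqrt 2 * μ * Real.exp (-b * x))
        = Real.sqrt 2 * μ * b⁻¹ := by
      rw [integral_const_mul]
      congr 1
      have h := integral_comp_mul_left_Ioi (fun x => Real.exp (-x)) 0 hb0
      simp only [mul_zero, smul_eq_mul] at h
      rw [show (fun x : ℝ => Real.exp (-b * x)) = fun x : ℝ => Real.exp (-(b * x)) by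
        funext x; ring_nf]
      rw [h, integral_exp_neg_Ioi]
      simp
    have step3 : Real.sqrt 2 * μ * b⁻¹ ≤ C / ρ := by
      have h1 : d * ρ / 2 ≤ b := by rw [hb]; linarith
      have h2 : b⁻¹ ≤ (d * ρ / 2)⁻¹ := inv_anti₀ (by positivity) h1
      have h3 : Real.sqrt 2 * μ * b⁻¹ ≤ Real.sqrt 2 * μ * (d * ρ / 2)⁻¹ :=
        mul_le_mul_of_nonneg_left h2 (by positivity)
      have h4 : Real.sqrt 2 * μ * (d * ρ / 2)⁻¹ = C / ρ := by
        rw [hC]; field_simp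
      linarith
    linarith [step1, step2.le, step2.ge, step3]
  -- lower bound
  have hlower : ∀ ρ : ℝ, max 2 (μ / (2 * d)) ≤ ρ →
      c / ρ ≤ ∫ x in Set.Ioi (0:ℝ),
        gaussQ (Real.sqrt (2 * d * ρ * x)) * (μ * Real.exp (-μ * x)) := by
    intro ρ hρ
    have hρ2 : (2:ℝ) ≤ ρ := le_trans (le_max_left _ _) hρ
    have hρ0 : 0 < ρ := by linarith
    have hρd : μ / (2 * d) ≤ ρ := le_trans (le_max_right _ _) hρ
    set r : ℝ := (2 * d * ρ)⁻¹ with hr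
    have hr0 : 0 < r := by positivity
    have hμr : μ * r ≤ 1 := by
      rw [hr, mul_inv_le_iff₀ (by positivity)]
      have : μ ≤ 2 * d * ρ := by
        rw [div_le_iff₀ (by positivity)] at hρd
        linarith
      linarith
    set K : ℝ := gaussQ 1 * (μ * Real.exp (-1)) with hK
    have hK0 : 0 < K := by
      have := gaussQ_one_pos
      positivity
    have step1 : K * r ≤ ∫ x in Set.Ioc (0:ℝ) r,
        gaussQ (Real.sqrt (2 * d * ρ * x)) * (μ * Real.exp (-μ * x)) := by
      have hconst : (∫ _x in Set.Ioc (0:ℝ) r, K) = K * r := by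
        rw [setIntegral_const, Real.volume_real_Ioc_of_le (by linarith : (0:ℝ) ≤ r), smul_eq_mul]
        ring
      rw [← hconst]
      refine setIntegral_mono_on (integrableOn_const ?_)
        ((hint ρ).mono_set Set.Ioc_subset_Ioi_self) measurableSet_Ioc ?_
      · rw [Real.volume_Ioc]; exact ENNReal.ofReal_ne_top
      · intro x hx
        have hx0 : 0 < x := hx.1
        have hxr : x ≤ r := hx.2
        have h1 : 2 * d * ρ * x ≤ 1 := by
          have h2 : 2 * d * ρ * x ≤ 2 * d * ρ * r :=
            mul_le_mul_of_nonneg_left hxr (by positivity)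
          have h3 : 2 * d * ρ * r = 1 := by
            rw [hr]; exact mul_inv_cancel₀ (by positivity)
          linarith
        have hs : Real.sqrt (2 * d * ρ * x) ≤ 1 := Real.sqrt_le_one.2 h1
        have hg : gaussQ 1 ≤ gaussQ (Real.sqrt (2 * d * ρ * x)) := gaussQ_antitone hs
        have he : Real.exp (-1) ≤ Real.exp (-μ * x) := by
          refine Real.exp_le_exp.2 ?_
          have : μ * x ≤ 1 := le_trans (mul_le_mul_of_nonneg_left hxr hμ.le) hμr
          linarith
        rw [hK]
        refine mul_le_mul hg (mul_le_mul_of_nonneg_left he hμ.le) (by positivity)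
          (gaussQ_nonneg _)
    have step2 : (∫ x in Set.Ioc (0:ℝ) r,
          gaussQ (Real.sqrt (2 * d * ρ * x)) * (μ * Real.exp (-μ * x)))
        ≤ ∫ x in Set.Ioi (0:ℝ),
          gaussQ (Real.sqrt (2 * d * ρ * x)) * (μ * Real.exp (-μ * x)) := by
      refine setIntegral_mono_set (hint ρ) (Filter.Eventually.of_forall fun x => ?_)
        (HasSubset.Subset.eventuallyLE Set.Ioc_subset_Ioi_self)
      exact mul_nonneg (gaussQ_nonneg _) (by positivity)
    have step3 : c / ρ = K * r := by
      rw [hc, hK, hr]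
      field_simp
    linarith
  -- squeeze
  have hlim : ∀ a : ℝ, Tendsto (fun ρ : ℝ => Real.log a / Real.log ρ - 1)
      atTop (nhds (-1)) := by
    intro a
    have h0 : Tendsto (fun ρ : ℝ => Real.log a / Real.log ρ) atTop (nhds 0) :=
      tendsto_const_nhds.div_atTop Real.tendsto_log_atTop
    simpa using h0.sub (tendsto_const_nhds : Tendsto (fun _ : ℝ => (1:ℝ)) atTop (nhds 1))
  refine tendsto_of_tendsto_of_tendsto_of_le_of_le' (hlim c) (hlim C) ?_ ?_
  · filter_upwards [eventually_ge_atTop (max 2 (μ / (2 * d)))] with ρ hρ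
    have hρ2 : (2:ℝ) ≤ ρ := le_trans (le_max_left _ _) hρ
    have hρ0 : 0 < ρ := by linarith
    have hlog : 0 < Real.log ρ := Real.log_pos (by linarith)
    have hPl := hlower ρ hρ
    have hP0 : 0 < ∫ x in Set.Ioi (0:ℝ),
        gaussQ (Real.sqrt (2 * d * ρ * x)) * (μ * Real.exp (-μ * x)) :=
      lt_of_lt_of_le (by positivity) hPl
    have l1 : Real.log (c / ρ) ≤ Real.log (∫ x in Set.Ioi (0:ℝ),
        gaussQ (Real.sqrt (2 * d * ρ * x)) * (μ * Real.exp (-μ * x))) :=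
      Real.log_le_log (by positivity) hPl
    calc Real.log c / Real.log ρ - 1
        = (Real.log c - Real.log ρ) / Real.log ρ := by
          rw [sub_div, div_self hlog.ne']
      _ = Real.log (c / ρ) / Real.log ρ := by rw [Real.log_div hc0.ne' hρ0.ne']
      _ ≤ _ := by
          apply div_le_div_of_nonneg_right l1 hlog.le
  · filter_upwards [eventually_ge_atTop (max 2 (μ / (2 * d)))] with ρ hρ
    have hρ2 : (2:ℝ) ≤ ρ := le_trans (le_max_left _ _) hρ
    have hρ0 : 0 < ρ := by linarith
    have hlog : 0 < Real.log ρ := Real.log_pos (by linarith)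
    have hPl := hlower ρ hρ
    have hPu := hupper ρ hρ2
    have hP0 : 0 < ∫ x in Set.Ioi (0:ℝ),
        gaussQ (Real.sqrt (2 * d * ρ * x)) * (μ * Real.exp (-μ * x)) :=
      lt_of_lt_of_le (by positivity) hPl
    have l1 : Real.log (∫ x in Set.Ioi (0:ℝ),
        gaussQ (Real.sqrt (2 * d * ρ * x)) * (μ * Real.exp (-μ * x)))
        ≤ Real.log (C / ρ) := Real.log_le_log hP0 hPu
    calc Real.log (∫ x in Set.Ioi (0:ℝ),
          gaussQ (Real.sqrt (2 * d * ρ * x)) * (μ * Real.exp (-μ * x))) / Real.log ρ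
        ≤ Real.log (C / ρ) / Real.log ρ := by
          apply div_le_div_of_nonneg_right l1 hlog.le
      _ = (Real.log C - Real.log ρ) / Real.log ρ := by
          rw [Real.log_div hC0.ne' hρ0.ne']
      _ = Real.log C / Real.log ρ - 1 := by rw [sub_div, div_self hlog.ne']
end

section
/- Let X, Y, Z be independent exponentially distributed random variables with rates μ₁, μ₂, μ₃ > 0 respectively, and let d₁, d₂ > 0. Define the CSA detection error probability P^C(ρ) = E[ Q(√(2d₁ρX + 2d₂ρY)) · Q(√(2d₁ρX)) · (1 − Q(√(2d₁ρZ))) + Q(√(2d₁ρX)) · Q(√(2d₁ρZ)) ]. Then lim_{ρ→∞} (log P^C(ρ))/(log ρ) = −2; that is, the CSA protocol achieves a second-order diversity gain in detecting the beacon message. -/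
open MeasureTheory Real Filter

namespace CSA

noncomputable def gphi (t : ℝ) : ℝ := (Real.sqrt (2 * Real.pi))⁻¹ * Real.exp (-t ^ 2 / 2)

lemma gphi_pos (t : ℝ) : 0 < gphi t := by
  have h2π : (0:ℝ) < Real.sqrt (2 * Real.pi) :=
    Real.sqrt_pos.mpr (by positivity)
  exact mul_pos (inv_pos.mpr h2π) (Real.exp_pos _)

lemma gphi_eq : gphi = fun t => (Real.sqrt (2 * Real.pi))⁻¹ * Real.exp (-(1/2) * t ^ 2) := by
  funext t; unfold gphi; ring_nf

lemma gphi_integrable : Integrable gphi := by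
  rw [gphi_eq]
  exact (integrable_exp_neg_mul_sq (by norm_num)).const_mul _

lemma gphi_integral : ∫ t, gphi t = 1 := by
  rw [gphi_eq, integral_const_mul, integral_gaussian]
  have : π / (1/2) = 2 * π := by ring
  rw [this]
  exact inv_mul_cancel₀ (ne_of_gt (Real.sqrt_pos.mpr (by positivity)))

lemma gphi_measurable : Measurable gphi := by
  unfold gphi; fun_prop

lemma gaussQ_eq (x : ℝ) : gaussQ x = ∫ t in Set.Ioi x, gphi t := rfl

lemma gaussQ_nonneg (x : ℝ) : 0 ≤ gaussQ x := by
  rw [gaussQ_eq]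
  exact setIntegral_nonneg measurableSet_Ioi fun t _ => (gphi_pos t).le

lemma gaussQ_le_one (x : ℝ) : gaussQ x ≤ 1 := by
  rw [gaussQ_eq, ← gphi_integral]
  exact setIntegral_le_integral gphi_integrable (ae_of_all _ fun t => (gphi_pos t).le)

lemma gaussQ_anti : Antitone gaussQ := by
  intro a b hab
  rw [gaussQ_eq, gaussQ_eq]
  exact setIntegral_mono_set gphi_integrable.integrableOn
    (ae_of_all _ fun t => (gphi_pos t).le)
    (HasSubset.Subset.eventuallyLE (Set.Ioi_subset_Ioi hab))

lemma gaussQ_measurable : Measurable gaussQ := gaussQ_anti.measurable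

lemma gaussQ_pos (x : ℝ) : 0 < gaussQ x := by
  rw [gaussQ_eq]
  rw [setIntegral_pos_iff_support_of_nonneg_ae
    (ae_of_all _ fun t => (gphi_pos t).le) gphi_integrable.integrableOn]
  have hs : Function.support gphi = Set.univ := by
    ext t; simp [Function.mem_support, (gphi_pos t).ne']
  rw [hs, Set.univ_inter]
  simp [Real.volume_Ioi]

lemma gaussQ_le_exp {x : ℝ} (hx : 0 ≤ x) : gaussQ x ≤ Real.exp (-x ^ 2 / 2) := by
  have key : ∀ t ∈ Set.Ioi x, gphi t ≤ Real.exp (-x ^ 2 / 2) * gphi (t - x) := by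
    intro t ht
    have ht' : x ≤ t := le_of_lt ht
    unfold gphi
    rw [mul_comm (Real.exp (-x ^ 2 / 2)), mul_assoc, ← Real.exp_add]
    have harg : -t ^ 2 / 2 ≤ -(t - x) ^ 2 / 2 + -x ^ 2 / 2 := by nlinarith
    exact mul_le_mul_of_nonneg_left (Real.exp_le_exp.mpr harg)
      (by positivity)
  have hint : Integrable (fun t => Real.exp (-x ^ 2 / 2) * gphi (t - x)) := by
    exact ((gphi_integrable.comp_sub_right x)).const_mul _
  calc gaussQ x ≤ ∫ t in Set.Ioi x, Real.exp (-x ^ 2 / 2) * gphi (t - x) := by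
        rw [gaussQ_eq]
        exact setIntegral_mono_on gphi_integrable.integrableOn hint.integrableOn
          measurableSet_Ioi key
    _ ≤ ∫ t, Real.exp (-x ^ 2 / 2) * gphi (t - x) :=
        setIntegral_le_integral hint
          (ae_of_all _ fun t => mul_nonneg (Real.exp_pos _).le (CSA.gphi_pos _).le)
    _ = Real.exp (-x ^ 2 / 2) := by
        rw [integral_const_mul, integral_sub_right_eq_self gphi x, gphi_integral, mul_one]

lemma expInt {c : ℝ} (hc : 0 < c) :
    IntegrableOn (fun x => Real.exp (-c * x)) (Set.Ioi 0) :=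
  exp_neg_integrableOn_Ioi 0 hc

lemma expVal {c : ℝ} (hc : 0 < c) :
    ∫ x in Set.Ioi (0:ℝ), Real.exp (-c * x) = c⁻¹ := by
  have := integral_comp_mul_left_Ioi (fun u => Real.exp (-u)) 0 hc
  simp only [mul_zero, integral_exp_neg_Ioi_zero, smul_eq_mul, mul_one] at this
  simpa only [neg_mul] using this

lemma densInt {μ : ℝ} (hμ : 0 < μ) :
    IntegrableOn (fun x => μ * Real.exp (-μ * x)) (Set.Ioi 0) :=
  (expInt hμ).const_mul μ

lemma densVal {μ : ℝ} (hμ : 0 < μ) :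
    ∫ x in Set.Ioi (0:ℝ), μ * Real.exp (-μ * x) = 1 := by
  rw [integral_const_mul, expVal hμ, mul_inv_cancel₀ hμ.ne']

/-- the one-dimensional error integral -/
noncomputable def qI (a μ ρ : ℝ) : ℝ :=
  ∫ x in Set.Ioi (0:ℝ), gaussQ (Real.sqrt (2 * a * ρ * x)) * (μ * Real.exp (-μ * x))

lemma qf_measurable (a ρ : ℝ) :
    Measurable (fun x : ℝ => gaussQ (Real.sqrt (2 * a * ρ * x))) :=
  gaussQ_measurable.comp (Real.continuous_sqrt.measurable.comp (by fun_prop))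

lemma qf_integrableOn {a μ ρ : ℝ} (hμ : 0 < μ) :
    IntegrableOn (fun x => gaussQ (Real.sqrt (2 * a * ρ * x)) * (μ * Real.exp (-μ * x)))
      (Set.Ioi 0) := by
  apply Integrable.mono (densInt hμ)
  · exact ((qf_measurable a ρ).mul (by fun_prop)).aestronglyMeasurable
  · refine ae_of_all _ fun x => ?_
    have h1 : 0 ≤ gaussQ (Real.sqrt (2 * a * ρ * x)) := gaussQ_nonneg _
    have h2 : gaussQ (Real.sqrt (2 * a * ρ * x)) ≤ 1 := gaussQ_le_one _
    have h3 : 0 < μ * Real.exp (-μ * x) := by positivity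
    rw [Real.norm_eq_abs, Real.norm_eq_abs, abs_of_nonneg (by positivity),
      abs_of_nonneg h3.le]
    nlinarith

lemma qI_nonneg (a ρ : ℝ) {μ : ℝ} (hμ : 0 < μ) : 0 ≤ qI a μ ρ :=
  setIntegral_nonneg measurableSet_Ioi fun x _ =>
    mul_nonneg (gaussQ_nonneg _) (by positivity)

lemma qI_le_one {a μ ρ : ℝ} (hμ : 0 < μ) : qI a μ ρ ≤ 1 := by
  rw [← densVal hμ]
  refine setIntegral_mono_on (qf_integrableOn hμ) (densInt hμ) measurableSet_Ioi
    fun x _ => ?_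
  have h2 : gaussQ (Real.sqrt (2 * a * ρ * x)) ≤ 1 := gaussQ_le_one _
  have h3 : 0 < μ * Real.exp (-μ * x) := by positivity
  nlinarith

lemma qI_le {a μ ρ : ℝ} (ha : 0 < a) (hμ : 0 < μ) (hρ : 0 < ρ) :
    qI a μ ρ ≤ μ / a * ρ⁻¹ := by
  have key : ∀ x ∈ Set.Ioi (0:ℝ),
      gaussQ (Real.sqrt (2 * a * ρ * x)) * (μ * Real.exp (-μ * x))
        ≤ μ * Real.exp (-(a * ρ + μ) * x) := by
    intro x hx
    have hx0 : (0:ℝ) < x := hx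
    have harg : (0:ℝ) ≤ 2 * a * ρ * x := by positivity
    have hQ : gaussQ (Real.sqrt (2 * a * ρ * x)) ≤ Real.exp (-(a * ρ * x)) := by
      have := gaussQ_le_exp (Real.sqrt_nonneg (2 * a * ρ * x))
      rwa [Real.sq_sqrt harg, show -(2 * a * ρ * x) / 2 = -(a * ρ * x) by ring] at this
    calc gaussQ (Real.sqrt (2 * a * ρ * x)) * (μ * Real.exp (-μ * x))
        ≤ Real.exp (-(a * ρ * x)) * (μ * Real.exp (-μ * x)) := by
          have : (0:ℝ) < μ * Real.exp (-μ * x) := by positivity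
          exact mul_le_mul_of_nonneg_right hQ this.le
      _ = μ * Real.exp (-(a * ρ + μ) * x) := by
          rw [mul_left_comm, ← Real.exp_add]; congr 2; ring
  have haρμ : (0:ℝ) < a * ρ + μ := by positivity
  calc qI a μ ρ ≤ ∫ x in Set.Ioi (0:ℝ), μ * Real.exp (-(a * ρ + μ) * x) :=
        setIntegral_mono_on (qf_integrableOn hμ) ((expInt haρμ).const_mul μ)
          measurableSet_Ioi key
    _ = μ * (a * ρ + μ)⁻¹ := by rw [integral_const_mul, expVal haρμ]
    _ ≤ μ / a * ρ⁻¹ := by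
        have h1 : (a * ρ + μ)⁻¹ ≤ (a * ρ)⁻¹ := by
          apply inv_anti₀ (by positivity) (by linarith)
        calc μ * (a * ρ + μ)⁻¹ ≤ μ * (a * ρ)⁻¹ :=
              mul_le_mul_of_nonneg_left h1 hμ.le
          _ = μ / a * ρ⁻¹ := by rw [mul_inv]; ring

lemma qI_ge {a μ ρ : ℝ} (ha : 0 < a) (hμ : 0 < μ) (hρ : 1 ≤ ρ) :
    gaussQ (Real.sqrt (2 * a)) * (μ * Real.exp (-μ)) * ρ⁻¹ ≤ qI a μ ρ := by
  have hρ0 : (0:ℝ) < ρ := lt_of_lt_of_le one_pos hρ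
  set c : ℝ := gaussQ (Real.sqrt (2 * a)) * (μ * Real.exp (-μ)) with hc
  have hcpos : 0 < c := by
    have := gaussQ_pos (Real.sqrt (2 * a)); positivity
  have key : ∀ x ∈ Set.Ioc (0:ℝ) ρ⁻¹,
      c ≤ gaussQ (Real.sqrt (2 * a * ρ * x)) * (μ * Real.exp (-μ * x)) := by
    intro x hx
    obtain ⟨hx0, hx1⟩ := hx
    have hxle1 : x ≤ 1 := hx1.trans (by
      rw [inv_le_one_iff₀]; right; exact hρ)
    have hρx : ρ * x ≤ 1 := by
      calc ρ * x ≤ ρ * ρ⁻¹ := by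
            exact mul_le_mul_of_nonneg_left hx1 hρ0.le
        _ = 1 := mul_inv_cancel₀ hρ0.ne'
    have hQ : gaussQ (Real.sqrt (2 * a)) ≤ gaussQ (Real.sqrt (2 * a * ρ * x)) := by
      apply gaussQ_anti
      apply Real.sqrt_le_sqrt
      nlinarith
    have hE : Real.exp (-μ) ≤ Real.exp (-μ * x) := by
      apply Real.exp_le_exp.mpr; nlinarith
    have h1 : 0 ≤ gaussQ (Real.sqrt (2 * a)) := gaussQ_nonneg _
    exact mul_le_mul hQ (mul_le_mul_of_nonneg_left hE hμ.le) (by positivity)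
      (gaussQ_nonneg _)
  calc c * ρ⁻¹ = ∫ _x in Set.Ioc (0:ℝ) ρ⁻¹, c := by
        rw [setIntegral_const, measureReal_def, Real.volume_Ioc, smul_eq_mul]
        rw [ENNReal.toReal_ofReal (by rw [sub_zero]; positivity)]
        ring
    _ ≤ ∫ x in Set.Ioc (0:ℝ) ρ⁻¹,
          gaussQ (Real.sqrt (2 * a * ρ * x)) * (μ * Real.exp (-μ * x)) := by
        refine setIntegral_mono_on (integrableOn_const ?_)
          ((qf_integrableOn hμ).mono_set Set.Ioc_subset_Ioi_self) measurableSet_Ioc key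
        rw [Real.volume_Ioc]; exact ENNReal.ofReal_ne_top
    _ ≤ qI a μ ρ := by
        exact setIntegral_mono_set (qf_integrableOn hμ)
          (ae_of_all _ fun x => mul_nonneg (gaussQ_nonneg _) (by positivity))
          (HasSubset.Subset.eventuallyLE Set.Ioc_subset_Ioi_self)
section Main
variable {μ₁ μ₂ μ₃ d₁ d₂ ρ : ℝ}
  (hμ₁ : 0 < μ₁) (hμ₂ : 0 < μ₂) (hμ₃ : 0 < μ₃) (hd₁ : 0 < d₁) (hd₂ : 0 < d₂)

lemma csa_bounds (hμ₁ : 0 < μ₁) (hμ₂ : 0 < μ₂) (hμ₃ : 0 < μ₃)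
    (hd₁ : 0 < d₁) (hd₂ : 0 < d₂) (hρ : 1 ≤ ρ) :
    (gaussQ (Real.sqrt (2 * d₁)) * (μ₁ * Real.exp (-μ₁)) *
        (gaussQ (Real.sqrt (2 * d₁)) * (μ₃ * Real.exp (-μ₃)))) * (ρ⁻¹ * ρ⁻¹)
      ≤ (∫ x in Set.Ioi (0 : ℝ), ∫ y in Set.Ioi (0 : ℝ), ∫ z in Set.Ioi (0 : ℝ),
            (gaussQ (Real.sqrt (2 * d₁ * ρ * x + 2 * d₂ * ρ * y)) *
                gaussQ (Real.sqrt (2 * d₁ * ρ * x)) *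
                (1 - gaussQ (Real.sqrt (2 * d₁ * ρ * z))) +
              gaussQ (Real.sqrt (2 * d₁ * ρ * x)) * gaussQ (Real.sqrt (2 * d₁ * ρ * z))) *
              ((μ₁ * Real.exp (-μ₁ * x)) * (μ₂ * Real.exp (-μ₂ * y)) *
                (μ₃ * Real.exp (-μ₃ * z)))) ∧
      (∫ x in Set.Ioi (0 : ℝ), ∫ y in Set.Ioi (0 : ℝ), ∫ z in Set.Ioi (0 : ℝ),
            (gaussQ (Real.sqrt (2 * d₁ * ρ * x + 2 * d₂ * ρ * y)) *
                gaussQ (Real.sqrt (2 * d₁ * ρ * x)) *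
                (1 - gaussQ (Real.sqrt (2 * d₁ * ρ * z))) +
              gaussQ (Real.sqrt (2 * d₁ * ρ * x)) * gaussQ (Real.sqrt (2 * d₁ * ρ * z))) *
              ((μ₁ * Real.exp (-μ₁ * x)) * (μ₂ * Real.exp (-μ₂ * y)) *
                (μ₃ * Real.exp (-μ₃ * z))))
        ≤ ((μ₂ / d₂ + μ₃ / d₁) * (μ₁ / d₁)) * (ρ⁻¹ * ρ⁻¹) := by
  have hρ0 : (0:ℝ) < ρ := lt_of_lt_of_le one_pos hρ
  set q₁ := qI d₁ μ₁ ρ with hq₁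
  set q₂ := qI d₂ μ₂ ρ with hq₂
  set q₃ := qI d₁ μ₃ ρ with hq₃
  have hq₁def : (∫ x in Set.Ioi (0:ℝ),
      gaussQ (Real.sqrt (2 * d₁ * ρ * x)) * (μ₁ * Real.exp (-μ₁ * x))) = q₁ := rfl
  have hq₂def : (∫ x in Set.Ioi (0:ℝ),
      gaussQ (Real.sqrt (2 * d₂ * ρ * x)) * (μ₂ * Real.exp (-μ₂ * x))) = q₂ := rfl
  have hq₃def : (∫ x in Set.Ioi (0:ℝ),
      gaussQ (Real.sqrt (2 * d₁ * ρ * x)) * (μ₃ * Real.exp (-μ₃ * x))) = q₃ := rfl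
  have hq₃01 : 0 ≤ q₃ ∧ q₃ ≤ 1 := ⟨qI_nonneg _ _ hμ₃, qI_le_one hμ₃⟩
  have h1q₃ : 0 ≤ 1 - q₃ := by linarith [hq₃01.2]
  -- abbreviations
  set D1 : ℝ → ℝ := fun x => μ₁ * Real.exp (-μ₁ * x) with hD1
  set D2 : ℝ → ℝ := fun y => μ₂ * Real.exp (-μ₂ * y) with hD2
  have hD1pos : ∀ x, 0 < D1 x := fun x => by positivity
  have hD2pos : ∀ y, 0 < D2 y := fun y => by positivity
  set A : ℝ → ℝ → ℝ := fun x y =>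
    gaussQ (Real.sqrt (2 * d₁ * ρ * x + 2 * d₂ * ρ * y)) *
      gaussQ (Real.sqrt (2 * d₁ * ρ * x)) with hA
  set B : ℝ → ℝ := fun x => gaussQ (Real.sqrt (2 * d₁ * ρ * x)) with hB
  have hA01 : ∀ x y, 0 ≤ A x y ∧ A x y ≤ 1 := fun x y =>
    ⟨mul_nonneg (gaussQ_nonneg _) (gaussQ_nonneg _),
     mul_le_one₀ (gaussQ_le_one _) (gaussQ_nonneg _) (gaussQ_le_one _)⟩
  have hB01 : ∀ x, 0 ≤ B x ∧ B x ≤ 1 := fun x => ⟨gaussQ_nonneg _, gaussQ_le_one _⟩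
  -- Step 1: inner z integral
  have hz : ∀ x y : ℝ,
      (∫ z in Set.Ioi (0:ℝ),
          (gaussQ (Real.sqrt (2 * d₁ * ρ * x + 2 * d₂ * ρ * y)) *
              gaussQ (Real.sqrt (2 * d₁ * ρ * x)) *
              (1 - gaussQ (Real.sqrt (2 * d₁ * ρ * z))) +
            gaussQ (Real.sqrt (2 * d₁ * ρ * x)) * gaussQ (Real.sqrt (2 * d₁ * ρ * z))) *
            ((μ₁ * Real.exp (-μ₁ * x)) * (μ₂ * Real.exp (-μ₂ * y)) *
              (μ₃ * Real.exp (-μ₃ * z))))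
        = D1 x * D2 y * (A x y * (1 - q₃) + B x * q₃) := by
    intro x y
    have hrw : (fun z => (gaussQ (Real.sqrt (2 * d₁ * ρ * x + 2 * d₂ * ρ * y)) *
              gaussQ (Real.sqrt (2 * d₁ * ρ * x)) *
              (1 - gaussQ (Real.sqrt (2 * d₁ * ρ * z))) +
            gaussQ (Real.sqrt (2 * d₁ * ρ * x)) * gaussQ (Real.sqrt (2 * d₁ * ρ * z))) *
            ((μ₁ * Real.exp (-μ₁ * x)) * (μ₂ * Real.exp (-μ₂ * y)) *
              (μ₃ * Real.exp (-μ₃ * z))))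
        = fun z => (D1 x * D2 y * A x y) * (μ₃ * Real.exp (-μ₃ * z)) +
            (D1 x * D2 y * (B x - A x y)) *
              (gaussQ (Real.sqrt (2 * d₁ * ρ * z)) * (μ₃ * Real.exp (-μ₃ * z))) := by
      funext z; simp only [hD1, hD2, hA, hB]; ring
    rw [hrw, integral_add ((densInt hμ₃).const_mul _) ((qf_integrableOn hμ₃).const_mul _),
      integral_const_mul (D1 x * D2 y * A x y),
      integral_const_mul (D1 x * D2 y * (B x - A x y)), densVal hμ₃, hq₃def]
    ring
  simp only [hz]
  -- the middle integrand
  set Fy : ℝ → ℝ → ℝ := fun x y => D1 x * D2 y * (A x y * (1 - q₃) + B x * q₃) with hFy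
  have hFy_nonneg : ∀ x y, 0 ≤ Fy x y := by
    intro x y
    have := hA01 x y; have := hB01 x
    have := (hD1pos x).le; have := (hD2pos y).le
    have : 0 ≤ A x y * (1 - q₃) + B x * q₃ := by
      apply add_nonneg (mul_nonneg (hA01 x y).1 h1q₃) (mul_nonneg (hB01 x).1 hq₃01.1)
    positivity
  have hFy_le2 : ∀ x y, Fy x y ≤ D1 x * D2 y * 2 := by
    intro x y
    have h1 := hA01 x y; have h2 := hB01 x
    have h3 : A x y * (1 - q₃) + B x * q₃ ≤ 2 := by nlinarith [hq₃01.1, hq₃01.2]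
    have hd1 := (hD1pos x).le; have hd2 := (hD2pos y).le
    exact mul_le_mul_of_nonneg_left h3 (by positivity)
  have hFy_meas : Measurable (fun p : ℝ × ℝ => Fy p.1 p.2) := by
    simp only [hFy, hD1, hD2, hA, hB]
    apply Measurable.mul
    · apply Measurable.mul <;> fun_prop
    · apply Measurable.add
      · apply Measurable.mul _ measurable_const
        apply Measurable.mul
        · exact gaussQ_measurable.comp (Real.continuous_sqrt.measurable.comp (by fun_prop))
        · exact gaussQ_measurable.comp (Real.continuous_sqrt.measurable.comp (by fun_prop))
      · apply Measurable.mul _ measurable_const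
        exact gaussQ_measurable.comp (Real.continuous_sqrt.measurable.comp (by fun_prop))
  have hFy_int : ∀ x, IntegrableOn (Fy x) (Set.Ioi 0) := by
    intro x
    apply Integrable.mono ((densInt hμ₂).const_mul (D1 x * 2))
    · exact (hFy_meas.comp (measurable_const.prodMk measurable_id)).aestronglyMeasurable
    · refine ae_of_all _ fun y => ?_
      rw [Real.norm_eq_abs, Real.norm_eq_abs, abs_of_nonneg (hFy_nonneg x y),
        abs_of_nonneg (by positivity : (0:ℝ) ≤ D1 x * 2 * (μ₂ * Real.exp (-μ₂ * y)))]
      calc Fy x y ≤ D1 x * D2 y * 2 := hFy_le2 x y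
        _ = D1 x * 2 * (μ₂ * Real.exp (-μ₂ * y)) := by simp only [hD2]; ring
  set Mid := fun x : ℝ => ∫ y in Set.Ioi (0:ℝ), Fy x y with hMid
  -- measurability and integrability of Mid
  have hMid_meas : StronglyMeasurable Mid :=
    hFy_meas.stronglyMeasurable.integral_prod_right' (ν := volume.restrict (Set.Ioi 0))
  have hMid_nonneg : ∀ x, 0 ≤ Mid x := fun x =>
    setIntegral_nonneg measurableSet_Ioi fun y _ => hFy_nonneg x y
  have hMid_le : ∀ x, Mid x ≤ D1 x * 2 := by
    intro x
    calc Mid x ≤ ∫ y in Set.Ioi (0:ℝ), D1 x * 2 * (μ₂ * Real.exp (-μ₂ * y)) := by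
          refine setIntegral_mono_on (hFy_int x) ((densInt hμ₂).const_mul _)
            measurableSet_Ioi fun y _ => ?_
          calc Fy x y ≤ D1 x * D2 y * 2 := hFy_le2 x y
            _ = D1 x * 2 * (μ₂ * Real.exp (-μ₂ * y)) := by simp only [hD2]; ring
      _ = D1 x * 2 := by rw [integral_const_mul, densVal hμ₂, mul_one]
  have hMid_int : IntegrableOn Mid (Set.Ioi 0) := by
    apply Integrable.mono ((densInt hμ₁).const_mul 2)
    · exact hMid_meas.aestronglyMeasurable
    · refine ae_of_all _ fun x => ?_
      rw [Real.norm_eq_abs, Real.norm_eq_abs, abs_of_nonneg (hMid_nonneg x),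
        abs_of_nonneg (by positivity : (0:ℝ) ≤ 2 * (μ₁ * Real.exp (-μ₁ * x)))]
      calc Mid x ≤ D1 x * 2 := hMid_le x
        _ = 2 * (μ₁ * Real.exp (-μ₁ * x)) := by simp only [hD1]; ring
  constructor
  · -- lower bound
    have hlow1 : ∀ x ∈ Set.Ioi (0:ℝ),
        q₃ * (gaussQ (Real.sqrt (2 * d₁ * ρ * x)) * (μ₁ * Real.exp (-μ₁ * x))) ≤ Mid x := by
      intro x _
      have : (q₃ * (gaussQ (Real.sqrt (2 * d₁ * ρ * x)) * (μ₁ * Real.exp (-μ₁ * x))))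
          = ∫ y in Set.Ioi (0:ℝ), (D1 x * B x * q₃) * (μ₂ * Real.exp (-μ₂ * y)) := by
        rw [integral_const_mul, densVal hμ₂, mul_one]
        simp only [hD1, hB]; ring
      rw [this]
      refine setIntegral_mono_on ((densInt hμ₂).const_mul _) (hFy_int x)
        measurableSet_Ioi fun y _ => ?_
      have key : Fy x y - D1 x * B x * q₃ * (μ₂ * Real.exp (-μ₂ * y))
          = D1 x * D2 y * (A x y * (1 - q₃)) := by simp only [hFy, hD2]; ring
      nlinarith [mul_nonneg (mul_nonneg (hD1pos x).le (hD2pos y).le)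
        (mul_nonneg (hA01 x y).1 h1q₃), key]
    have hlow2 : q₃ * q₁ ≤ ∫ x in Set.Ioi (0:ℝ), Mid x := by
      have : q₃ * q₁ = ∫ x in Set.Ioi (0:ℝ),
          q₃ * (gaussQ (Real.sqrt (2 * d₁ * ρ * x)) * (μ₁ * Real.exp (-μ₁ * x))) := by
        rw [integral_const_mul, hq₁def]
      rw [this]
      exact setIntegral_mono_on ((qf_integrableOn hμ₁).const_mul _) hMid_int
        measurableSet_Ioi hlow1
    refine le_trans ?_ hlow2
    have l₁ := qI_ge hd₁ hμ₁ hρ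
    have l₃ := qI_ge hd₁ hμ₃ hρ
    have hc₁ : 0 ≤ gaussQ (Real.sqrt (2 * d₁)) * (μ₁ * Real.exp (-μ₁)) * ρ⁻¹ := by
      have := gaussQ_nonneg (Real.sqrt (2 * d₁)); positivity
    have hc₃ : 0 ≤ gaussQ (Real.sqrt (2 * d₁)) * (μ₃ * Real.exp (-μ₃)) * ρ⁻¹ := by
      have := gaussQ_nonneg (Real.sqrt (2 * d₁)); positivity
    calc gaussQ (Real.sqrt (2 * d₁)) * (μ₁ * Real.exp (-μ₁)) *
            (gaussQ (Real.sqrt (2 * d₁)) * (μ₃ * Real.exp (-μ₃))) * (ρ⁻¹ * ρ⁻¹)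
        = (gaussQ (Real.sqrt (2 * d₁)) * (μ₃ * Real.exp (-μ₃)) * ρ⁻¹) *
            (gaussQ (Real.sqrt (2 * d₁)) * (μ₁ * Real.exp (-μ₁)) * ρ⁻¹) := by ring
      _ ≤ q₃ * q₁ := mul_le_mul l₃ l₁ hc₁ (qI_nonneg _ _ hμ₃)
  · -- upper bound
    have hup1 : ∀ x ∈ Set.Ioi (0:ℝ),
        Mid x ≤ ((1 - q₃) * q₂ + q₃) *
          (gaussQ (Real.sqrt (2 * d₁ * ρ * x)) * (μ₁ * Real.exp (-μ₁ * x))) := by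
      intro x hx
      have hx0 : (0:ℝ) < x := hx
      have hGint : IntegrableOn (fun y =>
          (D1 x * B x * (1 - q₃)) *
            (gaussQ (Real.sqrt (2 * d₂ * ρ * y)) * (μ₂ * Real.exp (-μ₂ * y))) +
          (D1 x * B x * q₃) * (μ₂ * Real.exp (-μ₂ * y))) (Set.Ioi 0) :=
        ((qf_integrableOn hμ₂).const_mul _).add ((densInt hμ₂).const_mul _)
      have hMle : Mid x ≤ ∫ y in Set.Ioi (0:ℝ),
          ((D1 x * B x * (1 - q₃)) *
            (gaussQ (Real.sqrt (2 * d₂ * ρ * y)) * (μ₂ * Real.exp (-μ₂ * y))) +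
          (D1 x * B x * q₃) * (μ₂ * Real.exp (-μ₂ * y))) := by
        refine setIntegral_mono_on (hFy_int x) hGint measurableSet_Ioi fun y hy => ?_
        have hy0 : (0:ℝ) < y := hy
        have hAle : A x y ≤ gaussQ (Real.sqrt (2 * d₂ * ρ * y)) * B x := by
          simp only [hA, hB]
          apply mul_le_mul_of_nonneg_right _ (gaussQ_nonneg _)
          apply gaussQ_anti
          apply Real.sqrt_le_sqrt
          nlinarith [mul_pos (mul_pos hd₁ hρ0) hx0]
        have key : (D1 x * B x * (1 - q₃)) *
              (gaussQ (Real.sqrt (2 * d₂ * ρ * y)) * (μ₂ * Real.exp (-μ₂ * y))) +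
            (D1 x * B x * q₃) * (μ₂ * Real.exp (-μ₂ * y)) - Fy x y
            = D1 x * D2 y * ((1 - q₃) * (gaussQ (Real.sqrt (2 * d₂ * ρ * y)) * B x - A x y)) := by
          simp only [hFy, hD2]; ring
        nlinarith [mul_nonneg (mul_nonneg (hD1pos x).le (hD2pos y).le)
          (mul_nonneg h1q₃ (sub_nonneg.mpr hAle)), key]
      have hGval : (∫ y in Set.Ioi (0:ℝ),
          ((D1 x * B x * (1 - q₃)) *
            (gaussQ (Real.sqrt (2 * d₂ * ρ * y)) * (μ₂ * Real.exp (-μ₂ * y))) +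
          (D1 x * B x * q₃) * (μ₂ * Real.exp (-μ₂ * y))))
          = D1 x * B x * (1 - q₃) * q₂ + D1 x * B x * q₃ := by
        rw [integral_add ((qf_integrableOn hμ₂).const_mul _) ((densInt hμ₂).const_mul _),
          integral_const_mul, integral_const_mul, densVal hμ₂, hq₂def, mul_one]
      rw [hGval] at hMle
      calc Mid x ≤ D1 x * B x * (1 - q₃) * q₂ + D1 x * B x * q₃ := hMle
        _ = ((1 - q₃) * q₂ + q₃) *
            (gaussQ (Real.sqrt (2 * d₁ * ρ * x)) * (μ₁ * Real.exp (-μ₁ * x))) := by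
          simp only [hD1, hB]; ring
    have hup2 : (∫ x in Set.Ioi (0:ℝ), Mid x) ≤ ((1 - q₃) * q₂ + q₃) * q₁ := by
      have : ((1 - q₃) * q₂ + q₃) * q₁ = ∫ x in Set.Ioi (0:ℝ),
          ((1 - q₃) * q₂ + q₃) *
            (gaussQ (Real.sqrt (2 * d₁ * ρ * x)) * (μ₁ * Real.exp (-μ₁ * x))) := by
        rw [integral_const_mul, hq₁def]
      rw [this]
      exact setIntegral_mono_on hMid_int ((qf_integrableOn hμ₁).const_mul _)
        measurableSet_Ioi hup1
    refine hup2.trans ?_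
    have hq₂le := qI_le hd₂ hμ₂ hρ0
    have hq₃le := qI_le hd₁ hμ₃ hρ0
    have hq₁le := qI_le hd₁ hμ₁ hρ0
    have hq₂0 := qI_nonneg d₂ ρ hμ₂
    have hq₁0 := qI_nonneg d₁ ρ hμ₁
    have h1 : (1 - q₃) * q₂ + q₃ ≤ q₂ + q₃ := by nlinarith [hq₃01.1]
    have h2 : q₂ + q₃ ≤ (μ₂ / d₂ + μ₃ / d₁) * ρ⁻¹ := by
      calc q₂ + q₃ ≤ μ₂ / d₂ * ρ⁻¹ + μ₃ / d₁ * ρ⁻¹ := add_le_add hq₂le hq₃le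
        _ = (μ₂ / d₂ + μ₃ / d₁) * ρ⁻¹ := by ring
    calc ((1 - q₃) * q₂ + q₃) * q₁ ≤ ((μ₂ / d₂ + μ₃ / d₁) * ρ⁻¹) * (μ₁ / d₁ * ρ⁻¹) := by
          apply mul_le_mul (h1.trans h2) hq₁le hq₁0
          positivity
      _ = ((μ₂ / d₂ + μ₃ / d₁) * (μ₁ / d₁)) * (ρ⁻¹ * ρ⁻¹) := by ring
end Main
end CSA

open CSA in
/-- Let `X, Y, Z` be independent exponentially distributed random variables with
rates `μ₁, μ₂, μ₃ > 0` and let `d₁, d₂ > 0`.  The CSA detection error probability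
`P^C(ρ) = E[ Q(√(2d₁ρX + 2d₂ρY)) Q(√(2d₁ρX)) (1 − Q(√(2d₁ρZ)))
           + Q(√(2d₁ρX)) Q(√(2d₁ρZ)) ]`
(written here as an integral against the joint density of `(X, Y, Z)`) satisfies
`lim_{ρ→∞} (log P^C(ρ))/(log ρ) = −2`: the CSA protocol achieves a second-order
diversity gain in detecting the beacon message. -/
theorem csa_error_diversity_two (μ₁ μ₂ μ₃ d₁ d₂ : ℝ)
    (hμ₁ : 0 < μ₁) (hμ₂ : 0 < μ₂) (hμ₃ : 0 < μ₃) (hd₁ : 0 < d₁) (hd₂ : 0 < d₂) :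
    Tendsto
      (fun ρ : ℝ =>
        Real.log (∫ x in Set.Ioi (0 : ℝ), ∫ y in Set.Ioi (0 : ℝ), ∫ z in Set.Ioi (0 : ℝ),
            (gaussQ (Real.sqrt (2 * d₁ * ρ * x + 2 * d₂ * ρ * y)) *
                gaussQ (Real.sqrt (2 * d₁ * ρ * x)) *
                (1 - gaussQ (Real.sqrt (2 * d₁ * ρ * z))) +
              gaussQ (Real.sqrt (2 * d₁ * ρ * x)) * gaussQ (Real.sqrt (2 * d₁ * ρ * z))) *
              ((μ₁ * Real.exp (-μ₁ * x)) * (μ₂ * Real.exp (-μ₂ * y)) *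
                (μ₃ * Real.exp (-μ₃ * z)))) / Real.log ρ)
      atTop (nhds (-2)) := by
  set cL : ℝ := gaussQ (Real.sqrt (2 * d₁)) * (μ₁ * Real.exp (-μ₁)) *
      (gaussQ (Real.sqrt (2 * d₁)) * (μ₃ * Real.exp (-μ₃))) with hcL
  set cU : ℝ := (μ₂ / d₂ + μ₃ / d₁) * (μ₁ / d₁) with hcU
  have hcLpos : 0 < cL := by
    have := gaussQ_pos (Real.sqrt (2 * d₁)); positivity
  have hcUpos : 0 < cU := by positivity
  have hlim : ∀ c : ℝ, Tendsto (fun ρ : ℝ => Real.log c / Real.log ρ - 2)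
      atTop (nhds (-2)) := by
    intro c
    have h1 : Tendsto (fun ρ : ℝ => Real.log c * (Real.log ρ)⁻¹) atTop
        (nhds (Real.log c * 0)) :=
      Filter.Tendsto.const_mul _ (Real.tendsto_log_atTop.inv_tendsto_atTop)
    rw [mul_zero] at h1
    have h2 := h1.sub_const 2
    rw [zero_sub] at h2
    exact h2.congr fun ρ => by rw [div_eq_mul_inv]
  refine tendsto_of_tendsto_of_tendsto_of_le_of_le' (hlim cL) (hlim cU) ?_ ?_
  · filter_upwards [eventually_ge_atTop (2:ℝ)] with ρ hρ
    have hρ1 : (1:ℝ) ≤ ρ := by linarith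
    have hρ0 : (0:ℝ) < ρ := by linarith
    have hlog : 0 < Real.log ρ := Real.log_pos (by linarith)
    obtain ⟨hlb, hub⟩ := csa_bounds hμ₁ hμ₂ hμ₃ hd₁ hd₂ hρ1
    set I : ℝ := ∫ x in Set.Ioi (0 : ℝ), ∫ y in Set.Ioi (0 : ℝ), ∫ z in Set.Ioi (0 : ℝ),
            (gaussQ (Real.sqrt (2 * d₁ * ρ * x + 2 * d₂ * ρ * y)) *
                gaussQ (Real.sqrt (2 * d₁ * ρ * x)) *
                (1 - gaussQ (Real.sqrt (2 * d₁ * ρ * z))) +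
              gaussQ (Real.sqrt (2 * d₁ * ρ * x)) * gaussQ (Real.sqrt (2 * d₁ * ρ * z))) *
              ((μ₁ * Real.exp (-μ₁ * x)) * (μ₂ * Real.exp (-μ₂ * y)) *
                (μ₃ * Real.exp (-μ₃ * z))) with hI
    have h0 : 0 < cL * (ρ⁻¹ * ρ⁻¹) := by positivity
    have hEq : Real.log (cL * (ρ⁻¹ * ρ⁻¹)) = Real.log cL - 2 * Real.log ρ := by
      rw [Real.log_mul hcLpos.ne' (mul_ne_zero (inv_ne_zero hρ0.ne') (inv_ne_zero hρ0.ne')),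
        Real.log_mul (inv_ne_zero hρ0.ne') (inv_ne_zero hρ0.ne'), Real.log_inv]
      ring
    have hlblog : Real.log cL - 2 * Real.log ρ ≤ Real.log I :=
      hEq ▸ Real.log_le_log h0 hlb
    calc Real.log cL / Real.log ρ - 2
        = (Real.log cL - 2 * Real.log ρ) / Real.log ρ := by
          rw [sub_div, mul_div_assoc, div_self hlog.ne', mul_one]
      _ ≤ Real.log I / Real.log ρ := (div_le_div_iff_of_pos_right hlog).mpr hlblog
  · filter_upwards [eventually_ge_atTop (2:ℝ)] with ρ hρ
    have hρ1 : (1:ℝ) ≤ ρ := by linarith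
    have hρ0 : (0:ℝ) < ρ := by linarith
    have hlog : 0 < Real.log ρ := Real.log_pos (by linarith)
    obtain ⟨hlb, hub⟩ := csa_bounds hμ₁ hμ₂ hμ₃ hd₁ hd₂ hρ1
    set I : ℝ := ∫ x in Set.Ioi (0 : ℝ), ∫ y in Set.Ioi (0 : ℝ), ∫ z in Set.Ioi (0 : ℝ),
            (gaussQ (Real.sqrt (2 * d₁ * ρ * x + 2 * d₂ * ρ * y)) *
                gaussQ (Real.sqrt (2 * d₁ * ρ * x)) *
                (1 - gaussQ (Real.sqrt (2 * d₁ * ρ * z))) +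
              gaussQ (Real.sqrt (2 * d₁ * ρ * x)) * gaussQ (Real.sqrt (2 * d₁ * ρ * z))) *
              ((μ₁ * Real.exp (-μ₁ * x)) * (μ₂ * Real.exp (-μ₂ * y)) *
                (μ₃ * Real.exp (-μ₃ * z))) with hI
    have hIpos : 0 < I := lt_of_lt_of_le (by positivity) hlb
    have hEq : Real.log (cU * (ρ⁻¹ * ρ⁻¹)) = Real.log cU - 2 * Real.log ρ := by
      rw [Real.log_mul hcUpos.ne' (mul_ne_zero (inv_ne_zero hρ0.ne') (inv_ne_zero hρ0.ne')),
        Real.log_mul (inv_ne_zero hρ0.ne') (inv_ne_zero hρ0.ne'), Real.log_inv]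
      ring
    have hublog : Real.log I ≤ Real.log cU - 2 * Real.log ρ :=
      hEq ▸ Real.log_le_log hIpos hub
    calc Real.log I / Real.log ρ
        ≤ (Real.log cU - 2 * Real.log ρ) / Real.log ρ :=
          (div_le_div_iff_of_pos_right hlog).mpr hublog
      _ = Real.log cU / Real.log ρ - 2 := by
          rw [sub_div, mul_div_assoc, div_self hlog.ne', mul_one]
end

section
/- Let P > 0 and let a, a', b, b' be positive reals with a ≤ a' and a'·b ≥ a·b' (equivalently a'/a ≥ b'/b). Then a' · log(1 + P/b') ≥ a · log(1 + P/b). -/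
/-- Concavity step: for `0 < s ≤ 1` and `0 ≤ u`, `s * log(1+u) ≤ log(1+s*u)`. -/
lemma log_concave_aux (s u : ℝ) (hs0 : 0 < s) (hs1 : s ≤ 1) (hu : 0 ≤ u) :
    s * Real.log (1 + u) ≤ Real.log (1 + s * u) := by
  have hconc := strictConcaveOn_log_Ioi.concaveOn
  have hx : (1 + u : ℝ) ∈ Set.Ioi (0:ℝ) := by simp; linarith
  have hy : (1 : ℝ) ∈ Set.Ioi (0:ℝ) := by norm_num
  have h := hconc.2 hx hy hs0.le (by linarith : (0:ℝ) ≤ 1 - s) (by ring)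
  simp only [smul_eq_mul, Real.log_one, mul_zero, add_zero] at h
  have : s * (1 + u) + (1 - s) * 1 = 1 + s * u := by ring
  rwa [this] at h

/-- Let `P > 0` and `a, a', b, b' > 0` with `a ≤ a'` and `a'·b ≥ a·b'`
(equivalently `a'/a ≥ b'/b`).  Then `a' · log(1 + P/b') ≥ a · log(1 + P/b)`. -/
theorem capacity_lower_bound_comparison (P a a' b b' : ℝ)
    (hP : 0 < P) (ha : 0 < a) (ha' : 0 < a') (hb : 0 < b) (hb' : 0 < b')
    (haa' : a ≤ a') (hab : a * b' ≤ a' * b) :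
    a * Real.log (1 + P / b) ≤ a' * Real.log (1 + P / b') := by
  set s : ℝ := a / a' with hs
  have hs0 : 0 < s := div_pos ha ha'
  have hs1 : s ≤ 1 := (div_le_one ha').mpr haa'
  have hins : s * (P / b) ≤ P / b' := by
    rw [hs, div_mul_div_comm, div_le_div_iff₀ (by positivity) hb']
    nlinarith [mul_le_mul_of_nonneg_left hab hP.le]
  have h1 : s * Real.log (1 + P / b) ≤ Real.log (1 + s * (P / b)) :=
    log_concave_aux s (P / b) hs0 hs1 (by positivity)
  have h2 : Real.log (1 + s * (P / b)) ≤ Real.log (1 + P / b') :=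
    Real.log_le_log (by positivity) (by linarith)
  have := mul_le_mul_of_nonneg_left (h1.trans h2) ha'.le
  have key : a' * (s * Real.log (1 + P / b)) = a * Real.log (1 + P / b) := by
    rw [hs]; field_simp
  linarith
end

section
/- Let X be an exponentially distributed random variable with rate 1, and let w₁ ≥ 0 and w₂ > 0. Then E[ 1 / (1 + w₁ + w₂/X) ] = 1/(1 + w₁) − ( w₂ / (1 + w₁)² ) · e^{ w₂/(1+w₁) } · ∫_{w₂/(1+w₁)}^∞ (e^{−t}/t) dt. -/
open MeasureTheory Real

/-- Let `X` be exponentially distributed with rate `1`, `w₁ ≥ 0`, `w₂ > 0`.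
Then `E[1/(1 + w₁ + w₂/X)]
  = 1/(1+w₁) − (w₂/(1+w₁)²) e^{w₂/(1+w₁)} ∫_{w₂/(1+w₁)}^∞ (e^{−t}/t) dt`,
the expectation being written as an integral against the density `e^{−x}` on
`(0,∞)`. -/
theorem throughput_ratio_expectation (w₁ w₂ : ℝ) (hw₁ : 0 ≤ w₁) (hw₂ : 0 < w₂) :
    ∫ x in Set.Ioi (0 : ℝ), (1 / (1 + w₁ + w₂ / x)) * Real.exp (-x) =
      1 / (1 + w₁) -
        (w₂ / (1 + w₁) ^ 2) * Real.exp (w₂ / (1 + w₁)) *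
          ∫ t in Set.Ioi (w₂ / (1 + w₁)), Real.exp (-t) / t := by
  have ha : (0:ℝ) < 1 + w₁ := by linarith
  set a : ℝ := 1 + w₁ with ha_def
  set c : ℝ := w₂ / a with hc_def
  have hc : 0 < c := div_pos hw₂ ha
  -- integrability of exp(-x)
  have I1 : IntegrableOn (fun x : ℝ => Real.exp (-x)) (Set.Ioi 0) := by
    simpa using exp_neg_integrableOn_Ioi (0:ℝ) one_pos
  -- integrability of g x = exp(-x)/(a*x + w₂) on Ioi 0
  have hgmeas : AEStronglyMeasurable (fun x : ℝ => Real.exp (-x) / (a * x + w₂))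
      (volume.restrict (Set.Ioi 0)) := by
    apply ContinuousOn.aestronglyMeasurable _ measurableSet_Ioi
    apply ContinuousOn.div (Continuous.continuousOn (by continuity))
      (Continuous.continuousOn (by continuity))
    intro x hx
    have : 0 < x := hx
    nlinarith
  have I2 : IntegrableOn (fun x : ℝ => Real.exp (-x) / (a * x + w₂)) (Set.Ioi 0) := by
    apply Integrable.mono' (I1.const_mul (1 / w₂)) hgmeas
    filter_upwards [ae_restrict_mem measurableSet_Ioi] with x hx
    have hx0 : (0:ℝ) < x := hx
    have hden : w₂ ≤ a * x + w₂ := by nlinarith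
    rw [Real.norm_eq_abs, abs_div, abs_of_pos (Real.exp_pos _),
      abs_of_pos (lt_of_lt_of_le hw₂ hden)]
    rw [div_le_iff₀ (lt_of_lt_of_le hw₂ hden)]
    have h3 : Real.exp (-x) * w₂ ≤ Real.exp (-x) * (a * x + w₂) :=
      mul_le_mul_of_nonneg_left hden (Real.exp_pos _).le
    calc Real.exp (-x) = 1 / w₂ * (Real.exp (-x) * w₂) := by field_simp
      _ ≤ 1 / w₂ * (Real.exp (-x) * (a * x + w₂)) :=
          mul_le_mul_of_nonneg_left h3 (by positivity)
      _ = 1 / w₂ * Real.exp (-x) * (a * x + w₂) := by ring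
  -- substitution: ∫ x in Ioi 0, g x = (1/a) * exp c * ∫ t in Ioi c, exp(-t)/t
  have sub1 : ∫ x in Set.Ioi (0:ℝ), Real.exp (-x) / (a * x + w₂)
      = (1 / a) * Real.exp c * ∫ t in Set.Ioi c, Real.exp (-t) / t := by
    have hmp : MeasurePreserving (fun x : ℝ => x + c) volume volume :=
      measurePreserving_add_right volume c
    have hemb : MeasurableEmbedding (fun x : ℝ => x + c) :=
      (MeasurableEquiv.addRight c).measurableEmbedding
    have key := hmp.setIntegral_preimage_emb hemb
      (fun t : ℝ => Real.exp (-t) / t) (Set.Ioi c)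
    have hpre : (fun x : ℝ => x + c) ⁻¹' Set.Ioi c = Set.Ioi 0 := by
      ext x; simp [Set.mem_Ioi]
    rw [hpre] at key
    rw [← key, ← integral_const_mul]
    apply setIntegral_congr_fun measurableSet_Ioi
    intro x hx
    have hx0 : (0:ℝ) < x := hx
    have hxc : 0 < x + c := by linarith
    have hax : a * x + w₂ = a * (x + c) := by
      rw [hc_def, mul_add, mul_div_cancel₀ _ (ne_of_gt ha)]
    show Real.exp (-x) / (a * x + w₂) = 1 / a * Real.exp c * (Real.exp (-(x + c)) / (x + c))
    rw [hax, Real.exp_neg, Real.exp_neg, Real.exp_add]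
    field_simp
  -- pointwise decomposition of the integrand
  have hpt : ∀ x ∈ Set.Ioi (0:ℝ),
      (1 / (1 + w₁ + w₂ / x)) * Real.exp (-x)
        = (1 / a) * Real.exp (-x) - (w₂ / a) * (Real.exp (-x) / (a * x + w₂)) := by
    intro x hx
    have hx0 : (0:ℝ) < x := hx
    have h1 : 0 < a * x + w₂ := by nlinarith
    have h2 : 1 + w₁ + w₂ / x = (a * x + w₂) / x := by
      field_simp [ha_def]
      rw [ha_def]; ring
    rw [h2]
    field_simp
    ring
  rw [setIntegral_congr_fun measurableSet_Ioi hpt]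
  rw [integral_sub ((I1.const_mul (1/a)).congr (by
        filter_upwards with x; ring))
      ((I2.const_mul (w₂/a)).congr (by filter_upwards with x; ring))]
  rw [integral_const_mul, integral_const_mul, integral_exp_neg_Ioi_zero, sub1]
  field_simp
end
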